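/- arXiv:1309.2897 — 2 statements merged into one kernel-verified Lean document; each statement's English description precedes it below -/
import Mathlib

section
/- In the group U_3 of unitriangular automorphisms of the free group F_3, the subgroup generated by λ_{3,1} and λ_{3,2} is a normal subgroup of U_3 and is a free group of rank 2 (freely generated by λ_{3,1} and λ_{3,2}). -/
/-- The set of generators `f_j` of the free group on `Fin n` with index `j < i`. -/
def lowerGens {n : ℕ} (i : Fin n) : Set (FreeGroup (Fin n)) :=
  {g | ∃ j : Fin n, j < i ∧ g = FreeGroup.of j}

/-- An automorphism `φ` of the free group of rank `n` is *unitriangular* (w.r.t. the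
standard basis `f_1, …, f_n`) if for every `i` it sends `f_i` to `u_i * f_i` with
`u_i` in the subgroup generated by `f_1, …, f_{i-1}`.  (For `i = 1` this forces
`φ f_1 = f_1`.) -/
def IsUnitriangular {n : ℕ} (φ : MulAut (FreeGroup (Fin n))) : Prop :=
  ∀ i : Fin n, ∃ u ∈ Subgroup.closure (lowerGens i),
    φ (FreeGroup.of i) = u * FreeGroup.of i

/-- `IsLambda i j φ` says that `φ` is the automorphism `λ_{i,j}` of the free group,
sending the basis element `f_i` to `f_j * f_i` and fixing all other basis elements. -/
def IsLambda {n : ℕ} (i j : Fin n) (φ : MulAut (FreeGroup (Fin n))) : Prop :=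
  φ (FreeGroup.of i) = FreeGroup.of j * FreeGroup.of i ∧
    ∀ k : Fin n, k ≠ i → φ (FreeGroup.of k) = FreeGroup.of k

/-! Every element of `U_3` sends `f_3` to `u f_3` with `u ∈ ⟨f_1, f_2⟩`, and a word `w` in
`λ_{3,1}, λ_{3,2}` fixes `f_1, f_2` and sends `f_3` to `ι(w)⁻¹ f_3`, where
`ι : F_2 → ⟨f_1, f_2⟩` is the isomorphism `x_j ↦ f_j⁻¹`. Hence the words act faithfully, and
they realise exactly the elements of `U_3` fixing `⟨f_1, f_2⟩` pointwise. That fixer is normal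
in `U_3` because every unitriangular automorphism preserves `⟨f_1, f_2⟩`. The same argument
works for `λ_{n+1,1}, …, λ_{n+1,n}` in `U_{n+1}`. -/

section FixingSubgroup

variable {G : Type*} [Group G] (U : Subgroup (MulAut G))

theorem fixingSubgroup_normal_of_apply_mem (S : Subgroup G)
    (hS : ∀ ψ ∈ U, ∀ x ∈ S, ψ x ∈ S) : (fixingSubgroup U (S : Set G)).Normal := by
  refine ⟨fun φ hφ ψ => (mem_fixingSubgroup_iff _).mpr fun x hx => ?_⟩
  have hψx : (ψ⁻¹ : MulAut G) x ∈ S := hS _ (inv_mem ψ.2) x hx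
  have hφx : (φ : MulAut G) ((ψ⁻¹ : MulAut G) x) = (ψ⁻¹ : MulAut G) x :=
    (mem_fixingSubgroup_iff _).mp hφ _ hψx
  change (ψ : MulAut G) ((φ : MulAut G) ((ψ⁻¹ : MulAut G) x)) = x
  rw [hφx, ← MulAut.mul_apply, mul_inv_cancel, MulAut.one_apply]

variable {U}

theorem apply_eq_of_mem_fixingSubgroup {s : Set G} {φ : U} (hφ : φ ∈ fixingSubgroup U s)
    {x : G} (hx : x ∈ s) : (φ : MulAut G) x = x :=
  (mem_fixingSubgroup_iff U).mp hφ x hx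

theorem apply_mul_of_mem_fixingSubgroup {s : Set G} {φ : U} (hφ : φ ∈ fixingSubgroup U s)
    {a : G} (ha : a ∈ s) (t : G) : (φ : MulAut G) (a * t) = a * (φ : MulAut G) t := by
  rw [map_mul, apply_eq_of_mem_fixingSubgroup hφ ha]

variable {S : Subgroup G} {α : Type*} {L : FreeGroup α →* U}

theorem freeGroupHom_mem_fixingSubgroup {s : Set G}
    (hfix : ∀ j, L (FreeGroup.of j) ∈ fixingSubgroup U s) (w : FreeGroup α) :
    L w ∈ fixingSubgroup U s := by
  induction w using FreeGroup.induction_on with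
  | C1 => rw [map_one]; exact one_mem _
  | of j => exact hfix j
  | inv_of j ih => rw [map_inv]; exact inv_mem ih
  | mul x y hx hy => rw [map_mul]; exact mul_mem hx hy

/-- Composition reverses the order of the left factors, hence the inverses. -/
theorem freeGroupHom_apply_eq_inv_lift_inv_mul {t : G} {s : α → G} (hs : ∀ j, s j ∈ S)
    (hfix : ∀ j, L (FreeGroup.of j) ∈ fixingSubgroup U (S : Set G))
    (ht : ∀ j, (L (FreeGroup.of j) : MulAut G) t = s j * t) (w : FreeGroup α) :
    (L w : MulAut G) t = (FreeGroup.lift (fun j => (s j)⁻¹) w)⁻¹ * t := by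
  have hσS : ∀ v, FreeGroup.lift (fun j => (s j)⁻¹) v ∈ S := by
    have : (FreeGroup.lift fun j => (s j)⁻¹).range ≤ S := by
      rw [FreeGroup.range_lift_eq_closure, Subgroup.closure_le, Set.range_subset_iff]
      exact fun j => inv_mem (hs j)
    exact fun v => this ⟨v, rfl⟩
  induction w using FreeGroup.induction_on with
  | C1 => simp
  | of j => simp [ht]
  | inv_of j =>
    rw [map_inv, map_inv, FreeGroup.lift_apply_of, inv_inv, Subgroup.coe_inv]
    apply (L (FreeGroup.of j) : MulAut G).injective
    rw [MulAut.apply_inv_self, apply_mul_of_mem_fixingSubgroup (hfix j) (inv_mem (hs j)), ht,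
      inv_mul_cancel_left]
  | mul x y hx hy =>
    rw [map_mul, map_mul, Subgroup.coe_mul, MulAut.mul_apply, hy,
      apply_mul_of_mem_fixingSubgroup (freeGroupHom_mem_fixingSubgroup hfix x)
        (inv_mem (hσS y)), hx, mul_inv_rev, mul_assoc]

end FixingSubgroup

theorem FreeGroup.lift_inv_of_injective {α β : Type*} {e : α → β}
    (he : Function.Injective e) :
    Function.Injective (FreeGroup.lift fun a => (FreeGroup.of (e a))⁻¹) := by
  set ν : FreeGroup α →* FreeGroup α := FreeGroup.lift fun a => (FreeGroup.of a)⁻¹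
  have hν : ν.comp ν = MonoidHom.id _ := FreeGroup.ext_hom _ _ fun a => by simp [ν]
  have hfactor : FreeGroup.lift (fun a => (FreeGroup.of (e a))⁻¹) = (FreeGroup.map e).comp ν :=
    FreeGroup.ext_hom _ _ fun a => by simp [ν]
  rw [hfactor, MonoidHom.coe_comp]
  exact (FreeGroup.map_injective he).comp (Function.LeftInverse.injective (g := ν)
    fun w => DFunLike.congr_fun hν w)

theorem lowerGens_mono {n : ℕ} {i j : Fin n} (hij : j ≤ i) : lowerGens j ⊆ lowerGens i :=
  fun _ ⟨k, hk, hg⟩ => ⟨k, hk.trans_le hij, hg⟩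

theorem lowerGens_last (n : ℕ) :
    lowerGens (Fin.last n) = Set.range fun j : Fin n => FreeGroup.of j.castSucc := by
  ext g
  simp only [lowerGens, Set.mem_ofPred_eq, Set.mem_range, Fin.lt_last_iff_ne_last]
  constructor
  · rintro ⟨k, hk, rfl⟩
    obtain ⟨j, rfl⟩ := Fin.exists_castSucc_eq.mpr hk
    exact ⟨j, rfl⟩
  · rintro ⟨j, rfl⟩
    exact ⟨j.castSucc, Fin.castSucc_ne_last j, rfl⟩

theorem of_castSucc_mem_closure_lowerGens_last {n : ℕ} (j : Fin n) :
    FreeGroup.of j.castSucc ∈ Subgroup.closure (lowerGens (Fin.last n)) :=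
  Subgroup.subset_closure (by rw [lowerGens_last]; exact ⟨j, rfl⟩)

theorem IsUnitriangular.apply_mem_closure_lowerGens {n : ℕ} {φ : MulAut (FreeGroup (Fin n))}
    (hφ : IsUnitriangular φ) (i : Fin n) {x : FreeGroup (Fin n)}
    (hx : x ∈ Subgroup.closure (lowerGens i)) : φ x ∈ Subgroup.closure (lowerGens i) := by
  suffices Subgroup.closure (lowerGens i) ≤
      (Subgroup.closure (lowerGens i)).comap φ.toMonoidHom from this hx
  rw [Subgroup.closure_le]
  rintro _ ⟨j, hj, rfl⟩
  obtain ⟨u, hu, hφj⟩ := hφ j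
  rw [Subgroup.coe_comap, Set.mem_preimage, MulEquiv.coe_toMonoidHom, hφj]
  exact mul_mem (Subgroup.closure_mono (lowerGens_mono hj.le) hu)
    (Subgroup.subset_closure ⟨j, hj, rfl⟩)

theorem IsLambda.apply_eq_of_mem_closure_lowerGens {n : ℕ} {i j : Fin n}
    {φ : MulAut (FreeGroup (Fin n))} (hφ : IsLambda i j φ) {x : FreeGroup (Fin n)}
    (hx : x ∈ Subgroup.closure (lowerGens i)) : φ x = x := by
  refine MonoidHom.eqOn_closure (f := φ.toMonoidHom) (g := MonoidHom.id _) ?_ hx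
  rintro _ ⟨k, hk, rfl⟩
  exact hφ.2 k hk.ne

theorem range_lift_inv_of_castSucc (n : ℕ) :
    (FreeGroup.lift fun j : Fin n => (FreeGroup.of j.castSucc)⁻¹).range =
      Subgroup.closure (lowerGens (Fin.last n)) := by
  rw [FreeGroup.range_lift_eq_closure, ← Set.inv_range, Subgroup.closure_inv, lowerGens_last]

theorem fixingSubgroup_closure_lowerGens_normal {n : ℕ}
    {U : Subgroup (MulAut (FreeGroup (Fin n)))} (hU : ∀ φ ∈ U, IsUnitriangular φ)
    (i : Fin n) :
    (fixingSubgroup U (Subgroup.closure (lowerGens i) : Set (FreeGroup (Fin n)))).Normal :=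
  fixingSubgroup_normal_of_apply_mem U _ fun ψ hψ _ hx =>
    (hU ψ hψ).apply_mem_closure_lowerGens i hx

section Lambda

variable {n : ℕ} {U : Subgroup (MulAut (FreeGroup (Fin (n + 1))))} {l : Fin n → U}

theorem lift_lambda_mem_fixingSubgroup (hl : ∀ j, IsLambda (Fin.last n) j.castSucc (l j))
    (w : FreeGroup (Fin n)) :
    FreeGroup.lift l w ∈
      fixingSubgroup U
        (Subgroup.closure (lowerGens (Fin.last n)) : Set (FreeGroup (Fin (n + 1)))) :=
  freeGroupHom_mem_fixingSubgroup (fun j => by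
    rw [FreeGroup.lift_apply_of, mem_fixingSubgroup_iff]
    exact fun _ hx => (hl j).apply_eq_of_mem_closure_lowerGens hx) w

theorem lift_lambda_apply_of_last (hl : ∀ j, IsLambda (Fin.last n) j.castSucc (l j))
    (w : FreeGroup (Fin n)) :
    (FreeGroup.lift l w : MulAut (FreeGroup (Fin (n + 1)))) (FreeGroup.of (Fin.last n)) =
      (FreeGroup.lift (fun j : Fin n => (FreeGroup.of j.castSucc)⁻¹) w)⁻¹ *
        FreeGroup.of (Fin.last n) :=
  freeGroupHom_apply_eq_inv_lift_inv_mul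
    of_castSucc_mem_closure_lowerGens_last
    (fun j => lift_lambda_mem_fixingSubgroup hl (FreeGroup.of j))
    (fun j => by rw [FreeGroup.lift_apply_of]; exact (hl j).1) w

theorem lift_lambda_injective (hl : ∀ j, IsLambda (Fin.last n) j.castSucc (l j)) :
    Function.Injective (FreeGroup.lift l) := by
  rw [injective_iff_map_eq_one]
  intro w hw
  have h := lift_lambda_apply_of_last hl w
  rw [hw, OneMemClass.coe_one, MulAut.one_apply, right_eq_mul, inv_eq_one] at h
  exact (FreeGroup.lift_inv_of_injective (Fin.castSucc_injective n)) (h.trans (map_one _).symm)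

theorem range_lift_lambda (hU : ∀ φ ∈ U, IsUnitriangular φ)
    (hl : ∀ j, IsLambda (Fin.last n) j.castSucc (l j)) :
    (FreeGroup.lift l).range =
      fixingSubgroup U
        (Subgroup.closure (lowerGens (Fin.last n)) : Set (FreeGroup (Fin (n + 1)))) := by
  refine le_antisymm ?_ fun φ hφ => ?_
  · rintro _ ⟨w, rfl⟩
    exact lift_lambda_mem_fixingSubgroup hl w
  obtain ⟨u, hu, hφu⟩ := hU φ φ.2 (Fin.last n)
  rw [← range_lift_inv_of_castSucc] at hu
  obtain ⟨w, hw⟩ := inv_mem hu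
  refine ⟨w, Subtype.ext (MulEquiv.toMonoidHom_injective (FreeGroup.ext_hom _ _ fun k => ?_))⟩
  induction k using Fin.lastCases with
  | last =>
    simp only [MulEquiv.coe_toMonoidHom, lift_lambda_apply_of_last hl, hw, inv_inv, hφu]
  | cast j =>
    have hj := of_castSucc_mem_closure_lowerGens_last j
    exact (apply_eq_of_mem_fixingSubgroup (lift_lambda_mem_fixingSubgroup hl w) hj).trans
      (apply_eq_of_mem_fixingSubgroup hφ hj).symm

end Lambda

/-- In `U_3`, the subgroup generated by `λ_{3,1}` and `λ_{3,2}` is normal and is a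
free group of rank 2, freely generated by `λ_{3,1}` and `λ_{3,2}`: the canonical
homomorphism from the free group of rank 2 sending the two free generators to
`λ_{3,1}` and `λ_{3,2}` is injective and has the generated subgroup as its range. -/
theorem unitriangular_three_free_normal_subgroup
    (U : Subgroup (MulAut (FreeGroup (Fin 3))))
    (hU : ∀ φ, φ ∈ U ↔ IsUnitriangular φ)
    (l31 l32 : MulAut (FreeGroup (Fin 3)))
    (h31 : IsLambda 2 0 l31) (h32 : IsLambda 2 1 l32)
    (m31 : l31 ∈ U) (m32 : l32 ∈ U) :
    (Subgroup.closure {(⟨l31, m31⟩ : U), ⟨l32, m32⟩}).Normal ∧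
    Function.Injective
      (FreeGroup.lift (fun j : Fin 2 => if j = 0 then (⟨l31, m31⟩ : U) else ⟨l32, m32⟩)) ∧
    (FreeGroup.lift (fun j : Fin 2 => if j = 0 then (⟨l31, m31⟩ : U) else ⟨l32, m32⟩)).range
      = Subgroup.closure {⟨l31, m31⟩, ⟨l32, m32⟩} := by
  set l : Fin 2 → U := fun j => if j = 0 then ⟨l31, m31⟩ else ⟨l32, m32⟩
  have hl : ∀ j : Fin 2, IsLambda (Fin.last 2) j.castSucc (l j) := by
    intro j
    fin_cases j
    exacts [h31, h32]
  have hrange : (FreeGroup.lift l).range = Subgroup.closure {⟨l31, m31⟩, ⟨l32, m32⟩} := by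
    rw [FreeGroup.range_lift_eq_closure]
    congr 1
    ext x
    simp [l, Fin.exists_fin_two, eq_comm]
  have hU' : ∀ φ ∈ U, IsUnitriangular φ := fun φ => (hU φ).mp
  refine ⟨?_, lift_lambda_injective hl, hrange⟩
  rw [← hrange, range_lift_lambda hU' hl]
  exact fixingSubgroup_closure_lowerGens_normal hU' _
end

section
/- Let U_3 be the group of unitriangular automorphisms of the free group F_3. Then U_3 is isomorphic to the one-relator group presented by ⟨a, b | [[a, b], b] = 1⟩, where an isomorphism sends a to λ_{3,2} and b to λ_{2,1} (commutators taken with the convention [g, f] = g f g^{-1} f^{-1}). -/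
open scoped commutatorElement

/-!
Indices are 0-based: `FreeGroup.of 0, of 1, of 2` are `f₁, f₂, f₃`, and `x = of false`,
`y = of true` are the basis of `F₂`.

A unitriangular automorphism fixes `f₁`, sends `f₂ ↦ f₁ⁿ f₂` and `f₃ ↦ u f₃` with
`u ∈ ⟨f₁, f₂⟩ ≅ F₂`, so it factors uniquely as `(f₃ ↦ u f₃) ∘ λ₂₁ⁿ`. The automorphisms
`f₃ ↦ u f₃` form a copy of `F₂` on which conjugation by `λ₂₁` acts as the shear `x ↦ x, y ↦ x y`;
hence `U₃ ≅ F₂ ⋊ ℤ`. The same free-by-cyclic group is presented by `⟨a, b | [[a, b], b]⟩`, via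
`a ↦ y⁻¹, b ↦ 1 ∈ ℤ` with inverse `y ↦ a⁻¹, x ↦ [b, a⁻¹] = a⁻¹ [a, b] a`: the relator says
exactly that conjugation by `b` fixes `x`.
-/

theorem commute_commutatorElement_inv_of_commute {G : Type*} [Group G] {a b : G}
    (h : Commute ⁅a, b⁆ b) : Commute b ⁅b, a⁻¹⁆ := by
  have hb : b = a⁻¹ * (⁅a, b⁆ * b) * a⁻¹⁻¹ := by rw [commutatorElement_def]; group
  have hc : ⁅b, a⁻¹⁆ = a⁻¹ * ⁅a, b⁆ * a⁻¹⁻¹ := by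
    rw [commutatorElement_def, commutatorElement_def]; group
  have := (Commute.conj_iff a⁻¹).mpr ((Commute.refl _).mul_right h).symm
  rwa [← hb, ← hc] at this

theorem MonoidHom.map_zpow_apply_of_map_apply {N H : Type*} [Group N] [Group H] {β : MulAut N}
    {f : N →* H} {g : H} (hf : ∀ n, f (β n) = g * f n * g⁻¹) (k : ℤ) (n : N) :
    f ((β ^ k) n) = g ^ k * f n * (g ^ k)⁻¹ := by
  induction k using Int.induction_on generalizing n with
  | zero => simp
  | succ k ih => rw [zpow_add_one, MulAut.mul_apply, ih, hf, zpow_add_one]; group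
  | pred k ih =>
    have hf' : f (β⁻¹ n) = g⁻¹ * f n * g := by
      have := hf (β⁻¹ n)
      rw [MulAut.apply_inv_self] at this
      rw [this]; group
    rw [zpow_sub_one, MulAut.mul_apply, ih, hf', zpow_sub_one]; group

namespace SemidirectProduct

theorem commutatorElement_inl_inr {N G : Type*} [Group N] [Group G] {φ : G →* MulAut N}
    (n : N) (g : G) : ⁅(inl n : N ⋊[φ] G), (inr g : N ⋊[φ] G)⁆ = inl (n * (φ g n)⁻¹) := by
  rw [commutatorElement_def, map_mul, ← map_inv, ← map_inv (φ g), inl_aut, map_inv inr]; group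

variable {N H : Type*} [Group N] [Group H] (β : MulAut N) (f : N →* H) (g : H)
  (hf : ∀ n, f (β n) = g * f n * g⁻¹)

def liftZPowers : N ⋊[zpowersHom (MulAut N) β] Multiplicative ℤ →* H :=
  lift f (zpowersHom H g) fun m => MonoidHom.ext fun n => f.map_zpow_apply_of_map_apply hf m.toAdd n

@[simp] theorem liftZPowers_inl (n : N) : liftZPowers β f g hf (inl n) = f n := lift_inl ..

@[simp] theorem liftZPowers_inr (m : Multiplicative ℤ) :
    liftZPowers β f g hf (inr m) = g ^ m.toAdd := lift_inr ..

end SemidirectProduct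

theorem MulAut.zpow_apply_eq_self {G : Type*} [Group G] {φ : MulAut G} {x : G}
    (hx : φ x = x) (n : ℤ) : (φ ^ n) x = x := by
  have h := Equiv.Perm.zpow_apply_eq_self_of_apply_eq_self (f := MulAut.toPerm G φ) hx n
  rwa [← map_zpow] at h

theorem MulAut.zpow_apply_of_apply_eq_mul {G : Type*} [Group G] {φ : MulAut G} {x y : G}
    (hx : φ x = x) (hy : φ y = x * y) (n : ℤ) : (φ ^ n) y = x ^ n * y := by
  induction n using Int.induction_on with
  | zero => simp
  | succ k ih =>
    rw [zpow_add_one, MulAut.mul_apply, hy, map_mul, ih, zpow_apply_eq_self hx, zpow_add_one]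
    group
  | pred k ih =>
    have hy' : φ⁻¹ y = x⁻¹ * y := by
      rw [← MulAut.inv_apply_self _ φ (x⁻¹ * y), map_mul, map_inv, hx, hy, inv_mul_cancel_left]
    rw [zpow_sub_one, MulAut.mul_apply, hy', map_mul, map_inv, ih, zpow_apply_eq_self hx,
      zpow_sub_one]
    group

theorem FreeGroup.mulAut_ext {α : Type*} {φ ψ : MulAut (FreeGroup α)}
    (h : ∀ a, φ (of a) = ψ (of a)) : φ = ψ :=
  MulEquiv.toMonoidHom_injective (FreeGroup.ext_hom _ _ h)

namespace UnitriangularThree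

open FreeGroup (of)
open SemidirectProduct

def shear : MulAut (FreeGroup Bool) :=
  MonoidHom.toMulEquiv (FreeGroup.lift fun t => if t then of false * of true else of false)
    (FreeGroup.lift fun t => if t then (of false)⁻¹ * of true else of false)
    (by ext t; cases t <;> simp) (by ext t; cases t <;> simp)

@[simp] theorem shear_of_false : shear (of false) = of false := by simp [shear]

@[simp] theorem shear_of_true : shear (of true) = of false * of true := by simp [shear]

abbrev FreeByCyclic := FreeGroup Bool ⋊[zpowersHom (MulAut _) shear] Multiplicative ℤ

theorem inr_ofAdd_one_mul_inl_mul_inv (w : FreeGroup Bool) :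
    (inr (.ofAdd 1) : FreeByCyclic) * inl w * (inr (.ofAdd 1))⁻¹ = inl (shear w) := by
  rw [← map_inv, ← inl_aut, zpowersHom_apply, toAdd_ofAdd, zpow_one]

abbrev OneRelatorGroup :=
  PresentedGroup ({⁅⁅of true, of false⁆, of false⁆} : Set (FreeGroup Bool))

namespace OneRelatorGroup

abbrev a : OneRelatorGroup := PresentedGroup.of true

abbrev b : OneRelatorGroup := PresentedGroup.of false

theorem commute_commutatorElement : Commute ⁅a, b⁆ b := by
  have h := PresentedGroup.one_of_mem (Set.mem_singleton ⁅⁅of true, of false⁆, of false⁆)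
  rw [map_commutatorElement, map_commutatorElement] at h
  exact commutatorElement_eq_one_iff_commute.mp h

def toFreeByCyclic : OneRelatorGroup →* FreeByCyclic :=
  PresentedGroup.toGroup (f := fun t => if t then inl (of true)⁻¹ else inr (.ofAdd 1)) <| by
    rintro _ rfl
    have hAB : ⁅(inl (of true)⁻¹ : FreeByCyclic), (inr (.ofAdd 1) : FreeByCyclic)⁆
        = inl ((of true)⁻¹ * of false * of true) := by
      rw [commutatorElement_inl_inr, zpowersHom_apply, toAdd_ofAdd, zpow_one, map_inv,
        shear_of_true, inv_inv, mul_assoc]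
    have hfix : shear ((of true)⁻¹ * of false * of true) = (of true)⁻¹ * of false * of true := by
      simp [mul_assoc]
    simp only [map_commutatorElement, FreeGroup.lift_apply_of, if_true, Bool.false_eq_true,
      if_false, hAB, commutatorElement_inl_inr, zpowersHom_apply, toAdd_ofAdd, zpow_one, hfix,
      mul_inv_cancel, map_one]

@[simp] theorem toFreeByCyclic_a : toFreeByCyclic a = inl (of true)⁻¹ := PresentedGroup.toGroup.of _

@[simp] theorem toFreeByCyclic_b : toFreeByCyclic b = inr (.ofAdd 1) := PresentedGroup.toGroup.of _

def ofFreeGroup : FreeGroup Bool →* OneRelatorGroup :=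
  FreeGroup.lift fun t => if t then a⁻¹ else ⁅b, a⁻¹⁆

@[simp] theorem ofFreeGroup_of_false : ofFreeGroup (of false) = ⁅b, a⁻¹⁆ := by simp [ofFreeGroup]

@[simp] theorem ofFreeGroup_of_true : ofFreeGroup (of true) = a⁻¹ := by simp [ofFreeGroup]

theorem ofFreeGroup_shear (w : FreeGroup Bool) :
    ofFreeGroup (shear w) = b * ofFreeGroup w * b⁻¹ := by
  refine DFunLike.congr_fun (FreeGroup.ext_hom (ofFreeGroup.comp shear.toMonoidHom)
    ((MulAut.conj b).toMonoidHom.comp ofFreeGroup) fun t => ?_) w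
  cases t
  · show ofFreeGroup (shear (of false)) = b * ofFreeGroup (of false) * b⁻¹
    rw [shear_of_false, ofFreeGroup_of_false]
    exact (commute_commutatorElement_inv_of_commute commute_commutatorElement).mul_inv_cancel.symm
  · show ofFreeGroup (shear (of true)) = b * ofFreeGroup (of true) * b⁻¹
    simp [commutatorElement_def]

def ofFreeByCyclic : FreeByCyclic →* OneRelatorGroup :=
  liftZPowers shear ofFreeGroup b ofFreeGroup_shear

@[simp] theorem ofFreeByCyclic_inl (w : FreeGroup Bool) : ofFreeByCyclic (inl w) = ofFreeGroup w :=
  liftZPowers_inl ..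

@[simp] theorem ofFreeByCyclic_inr_ofAdd_one : ofFreeByCyclic (inr (.ofAdd 1)) = b := by
  simp [ofFreeByCyclic]

theorem ofFreeByCyclic_comp_toFreeByCyclic : ofFreeByCyclic.comp toFreeByCyclic = .id _ :=
  PresentedGroup.ext fun t => by cases t <;> simp

theorem toFreeByCyclic_comp_ofFreeByCyclic : toFreeByCyclic.comp ofFreeByCyclic = .id _ := by
  refine hom_ext (FreeGroup.ext_hom _ _ fun t => ?_) (MonoidHom.ext_mint (by simp))
  cases t
  · show toFreeByCyclic ⁅b, a⁻¹⁆ = inl (of false)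
    rw [map_commutatorElement, map_inv, toFreeByCyclic_a, toFreeByCyclic_b, ← map_inv, inv_inv,
      commutatorElement_def, inr_ofAdd_one_mul_inl_mul_inv, shear_of_true, ← map_inv, ← map_mul,
      mul_inv_cancel_right]
  · simp

def equivFreeByCyclic : OneRelatorGroup ≃* FreeByCyclic :=
  MonoidHom.toMulEquiv toFreeByCyclic ofFreeByCyclic ofFreeByCyclic_comp_toFreeByCyclic
    toFreeByCyclic_comp_ofFreeByCyclic

end OneRelatorGroup

def embed : FreeGroup Bool →* FreeGroup (Fin 3) := FreeGroup.map fun t => if t then 1 else 0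

@[simp] theorem embed_of_false : embed (of false) = of 0 := rfl

@[simp] theorem embed_of_true : embed (of true) = of 1 := rfl

theorem embed_injective : Function.Injective embed :=
  FreeGroup.map_injective (by decide)

theorem lowerGens_eq_image {n : ℕ} (i : Fin n) : lowerGens i = of '' Set.Iio i := by
  ext; simp [lowerGens, eq_comm]

theorem closure_lowerGens_zero : Subgroup.closure (lowerGens (0 : Fin 3)) = ⊥ := by
  simp [lowerGens_eq_image]

theorem closure_lowerGens_one :
    Subgroup.closure (lowerGens (1 : Fin 3)) = Subgroup.zpowers (of 0) := by
  have h : Set.Iio (1 : Fin 3) = {0} := by ext j; fin_cases j <;> simp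
  rw [lowerGens_eq_image, h, Set.image_singleton, Subgroup.zpowers_eq_closure]

theorem closure_lowerGens_two : Subgroup.closure (lowerGens (2 : Fin 3)) = embed.range := by
  have h : Set.Iio (2 : Fin 3) = Set.range fun t : Bool => if t then 1 else 0 := by
    ext j; fin_cases j <;> simp [Fin.lt_def]
  rw [lowerGens_eq_image, embed, FreeGroup.range_map, h]

section IsUnitriangular

variable {φ : MulAut (FreeGroup (Fin 3))} (hφ : IsUnitriangular φ)
include hφ

theorem IsUnitriangular.apply_of_zero : φ (of 0) = of 0 := by
  obtain ⟨u, hu, h⟩ := hφ 0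
  rw [closure_lowerGens_zero, Subgroup.mem_bot] at hu
  rwa [hu, one_mul] at h

theorem IsUnitriangular.exists_apply_of_one : ∃ n : ℤ, φ (of 1) = of 0 ^ n * of 1 := by
  obtain ⟨u, hu, h⟩ := hφ 1
  rw [closure_lowerGens_one] at hu
  obtain ⟨n, rfl⟩ := hu
  exact ⟨n, h⟩

theorem IsUnitriangular.exists_apply_of_two : ∃ w, φ (of 2) = embed w * of 2 := by
  obtain ⟨u, hu, h⟩ := hφ 2
  rw [closure_lowerGens_two] at hu
  obtain ⟨w, rfl⟩ := hu
  exact ⟨w, h⟩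

end IsUnitriangular

theorem mulAut_ext_fin_three {φ ψ : MulAut (FreeGroup (Fin 3))} (h0 : φ (of 0) = ψ (of 0))
    (h1 : φ (of 1) = ψ (of 1)) (h2 : φ (of 2) = ψ (of 2)) : φ = ψ :=
  FreeGroup.mulAut_ext fun i => by fin_cases i; exacts [h0, h1, h2]

-- The inverse makes `w ↦ transvectionEnd w` multiplicative rather than antimultiplicative.
def transvectionEnd (w : FreeGroup Bool) : FreeGroup (Fin 3) →* FreeGroup (Fin 3) :=
  FreeGroup.lift fun i => if i = 2 then (embed w)⁻¹ * of 2 else of i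

@[simp] theorem transvectionEnd_of_zero (w : FreeGroup Bool) :
    transvectionEnd w (of 0) = of 0 := by
  simp [transvectionEnd]

@[simp] theorem transvectionEnd_of_one (w : FreeGroup Bool) :
    transvectionEnd w (of 1) = of 1 := by
  simp [transvectionEnd]

@[simp] theorem transvectionEnd_of_two (w : FreeGroup Bool) :
    transvectionEnd w (of 2) = (embed w)⁻¹ * of 2 := by
  simp [transvectionEnd]

@[simp] theorem transvectionEnd_embed (w v : FreeGroup Bool) :
    transvectionEnd w (embed v) = embed v := by
  refine DFunLike.congr_fun (FreeGroup.ext_hom ((transvectionEnd w).comp embed) embed ?_) v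
  intro t; cases t <;> simp

theorem transvectionEnd_one : transvectionEnd 1 = MonoidHom.id _ := by
  ext i; fin_cases i <;> simp

theorem transvectionEnd_mul (v w : FreeGroup Bool) :
    transvectionEnd (v * w) = (transvectionEnd v).comp (transvectionEnd w) := by
  ext i; fin_cases i <;> simp [mul_assoc]

def transvection : FreeGroup Bool →* MulAut (FreeGroup (Fin 3)) where
  toFun w := MonoidHom.toMulEquiv (transvectionEnd w) (transvectionEnd w⁻¹)
    (by rw [← transvectionEnd_mul, inv_mul_cancel, transvectionEnd_one])
    (by rw [← transvectionEnd_mul, mul_inv_cancel, transvectionEnd_one])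
  map_one' := MulEquiv.ext fun x => by simp [transvectionEnd_one]
  map_mul' v w := MulEquiv.ext fun x => by simp [transvectionEnd_mul]

theorem transvection_apply (w : FreeGroup Bool) (x : FreeGroup (Fin 3)) :
    transvection w x = transvectionEnd w x := rfl

theorem transvection_inv_of_true {l32 : MulAut (FreeGroup (Fin 3))} (h32 : IsLambda 2 1 l32) :
    transvection (of true)⁻¹ = l32 := by
  refine mulAut_ext_fin_three ?_ ?_ ?_ <;> simp only [transvection_apply] <;>
    simp [h32.1, h32.2 0 (by decide), h32.2 1 (by decide)]

section Lambda21

variable {l21 : MulAut (FreeGroup (Fin 3))} (h21 : IsLambda 1 0 l21)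
include h21

theorem apply_embed_eq_embed_shear (w : FreeGroup Bool) : l21 (embed w) = embed (shear w) := by
  refine DFunLike.congr_fun (FreeGroup.ext_hom (l21.toMonoidHom.comp embed)
    (embed.comp shear.toMonoidHom) fun t => ?_) w
  cases t
  · exact h21.2 0 (by decide)
  · exact h21.1

theorem transvection_shear (w : FreeGroup Bool) :
    transvection (shear w) = l21 * transvection w * l21⁻¹ := by
  refine eq_mul_inv_of_mul_eq (mulAut_ext_fin_three ?_ ?_ ?_) <;>
    simp [transvection_apply, h21.1, h21.2 0 (by decide), h21.2 2 (by decide),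
      apply_embed_eq_embed_shear h21]

def unitriangularHom : FreeByCyclic →* MulAut (FreeGroup (Fin 3)) :=
  liftZPowers shear transvection l21 (transvection_shear h21)

theorem unitriangularHom_inl (w : FreeGroup Bool) :
    unitriangularHom h21 (inl w) = transvection w :=
  liftZPowers_inl ..

theorem unitriangularHom_inr_ofAdd_one : unitriangularHom h21 (inr (.ofAdd 1)) = l21 := by
  simp [unitriangularHom]

theorem unitriangularHom_apply (k : FreeByCyclic) :
    unitriangularHom h21 k = transvection k.left * l21 ^ k.right.toAdd := by
  conv_lhs => rw [← inl_left_mul_inr_right k]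
  rw [map_mul, unitriangularHom, liftZPowers_inl, liftZPowers_inr]

theorem unitriangularHom_apply_of_zero (k : FreeByCyclic) :
    unitriangularHom h21 k (of 0) = of 0 := by
  rw [unitriangularHom_apply, MulAut.mul_apply, MulAut.zpow_apply_eq_self (h21.2 0 (by decide)),
    transvection_apply, transvectionEnd_of_zero]

theorem unitriangularHom_apply_of_one (k : FreeByCyclic) :
    unitriangularHom h21 k (of 1) = of 0 ^ k.right.toAdd * of 1 := by
  rw [unitriangularHom_apply, MulAut.mul_apply,
    MulAut.zpow_apply_of_apply_eq_mul (h21.2 0 (by decide)) h21.1]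
  simp [transvection_apply]

theorem unitriangularHom_apply_of_two (k : FreeByCyclic) :
    unitriangularHom h21 k (of 2) = (embed k.left)⁻¹ * of 2 := by
  rw [unitriangularHom_apply, MulAut.mul_apply, MulAut.zpow_apply_eq_self (h21.2 2 (by decide)),
    transvection_apply, transvectionEnd_of_two]

theorem unitriangularHom_injective : Function.Injective (unitriangularHom h21) := by
  refine (injective_iff_map_eq_one _).mpr fun k hk => ?_
  have hright : k.right.toAdd = 0 := by
    have h1 := unitriangularHom_apply_of_one h21 k
    rwa [hk, MulAut.one_apply, right_eq_mul, IsMulTorsionFree.zpow_eq_one_iff_right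
      (FreeGroup.of_ne_one _)] at h1
  have hleft : k.left = 1 := by
    have h2 := unitriangularHom_apply_of_two h21 k
    rw [hk, MulAut.one_apply, right_eq_mul, inv_eq_one, ← map_one embed] at h2
    exact embed_injective h2
  exact SemidirectProduct.ext hleft hright

theorem isUnitriangular_iff_mem_range {φ : MulAut (FreeGroup (Fin 3))} :
    IsUnitriangular φ ↔ φ ∈ (unitriangularHom h21).range := by
  constructor
  · intro hφ
    obtain ⟨n, hn⟩ := IsUnitriangular.exists_apply_of_one hφ
    obtain ⟨w, hw⟩ := IsUnitriangular.exists_apply_of_two hφ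
    refine ⟨⟨w⁻¹, .ofAdd n⟩, mulAut_ext_fin_three ?_ ?_ ?_⟩
    · rw [unitriangularHom_apply_of_zero, IsUnitriangular.apply_of_zero hφ]
    · rw [unitriangularHom_apply_of_one, hn]; rfl
    · rw [unitriangularHom_apply_of_two, hw, map_inv, inv_inv]
  · rintro ⟨k, rfl⟩ i
    fin_cases i
    · exact ⟨1, one_mem _, by simpa using unitriangularHom_apply_of_zero h21 k⟩
    · exact ⟨_, closure_lowerGens_one.ge (Subgroup.zpow_mem_zpowers _ _),
        unitriangularHom_apply_of_one h21 k⟩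
    · exact ⟨_, closure_lowerGens_two.ge ⟨k.left⁻¹, map_inv _ _⟩,
        unitriangularHom_apply_of_two h21 k⟩

end Lambda21

end UnitriangularThree

/-- `U_3` is isomorphic to the one-relator group `⟨a, b | [[a, b], b] = 1⟩`
(with `[g, f] = g f g⁻¹ f⁻¹`, which is Mathlib's commutator convention `⁅g, f⁆`),
by an isomorphism sending `a` to `λ_{3,2}` and `b` to `λ_{2,1}`. -/
theorem unitriangular_three_presentation
    (U : Subgroup (MulAut (FreeGroup (Fin 3))))
    (hU : ∀ φ, φ ∈ U ↔ IsUnitriangular φ)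
    (l32 l21 : MulAut (FreeGroup (Fin 3)))
    (h32 : IsLambda 2 1 l32) (h21 : IsLambda 1 0 l21)
    (m32 : l32 ∈ U) (m21 : l21 ∈ U) :
    ∃ e : PresentedGroup
        ({⁅⁅FreeGroup.of true, FreeGroup.of false⁆, FreeGroup.of false⁆} :
          Set (FreeGroup Bool)) ≃* U,
      e (PresentedGroup.of true) = ⟨l32, m32⟩ ∧
      e (PresentedGroup.of false) = ⟨l21, m21⟩ := by
  have hrange : (UnitriangularThree.unitriangularHom h21).range = U := by
    ext φ
    rw [hU, UnitriangularThree.isUnitriangular_iff_mem_range h21]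
  refine ⟨UnitriangularThree.OneRelatorGroup.equivFreeByCyclic.trans <|
    (MonoidHom.ofInjective (UnitriangularThree.unitriangularHom_injective h21)).trans
      (MulEquiv.subgroupCongr hrange), Subtype.ext ?_, Subtype.ext ?_⟩
  · exact (UnitriangularThree.unitriangularHom_inl h21 _).trans
      (UnitriangularThree.transvection_inv_of_true h32)
  · exact UnitriangularThree.unitriangularHom_inr_ofAdd_one h21
end
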